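/- Let n ≥ 1, let 0 ≤ δ < 1/(2n), and let v'₁, …, v'ₙ be unit vectors in a complex inner product space such that |⟨v'_i, v'_j⟩| ≤ δ for all i ≠ j. Let v₁, …, vₙ be the Gram–Schmidt orthonormalization of v'₁, …, v'ₙ. Then for every i with 1 ≤ i ≤ n, the trace norm of the difference of the rank-one projections satisfies ‖|v_i⟩⟨v_i| − |v'_i⟩⟨v'_i|‖₁ = 2·√(1 − |⟨v_i, v'_i⟩|²) ≤ 2√6 · δ · √n. -/

import Mathlib

open scoped ComplexInnerProductSpace

instance (n : ℕ) : WellFoundedLT (Fin n) := inferInstance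

/-- The trace norm `‖A‖₁ = Tr √(A†A)` of an operator on a finite-dimensional complex
inner product space, i.e. the sum of the singular values of `A` (the square roots of
the eigenvalues of the symmetric operator `A†A`). -/
noncomputable def traceNorm {E : Type} [NormedAddCommGroup E] [InnerProductSpace ℂ E]
    [FiniteDimensional ℂ E] (A : E →ₗ[ℂ] E) : ℝ :=
  ∑ i : Fin (Module.finrank ℂ E),
    Real.sqrt ((LinearMap.isSymmetric_adjoint_mul_self A).eigenvalues rfl i)

/-- The rank-one operator `|v⟩⟨v| : w ↦ ⟨v, w⟩·v`; for a unit vector `v` this is the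
orthogonal projection onto the span of `v`. -/
noncomputable def outer {E : Type} [NormedAddCommGroup E] [InnerProductSpace ℂ E]
    (v : E) : E →ₗ[ℂ] E where
  toFun w := ⟪v, w⟫ • v
  map_add' a b := by simp [inner_add_right, add_smul]
  map_smul' c a := by simp [inner_smul_right, smul_smul]

/-!
For unit vectors `v, w` put `P = |v⟩⟨v|`, `Q = |w⟩⟨w|` and `A = P - Q`. Since `PQP = |⟨v,w⟩|² P`
and `QPQ = |⟨v,w⟩|² Q`, the self-adjoint operator `A†A = A²` satisfies `(A²)² = t A²` with
`t = 1 - |⟨v,w⟩|²`. So its eigenvalues are `0` or `t`, and the trace norm of `A` is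
`tr(A²) / √t = 2t / √t = 2√t`.

For the bound, write `v'ᵢ = gᵢ + wᵢ` where `gᵢ` is the unnormalised Gram–Schmidt vector, `gᵢ ⊥ wᵢ`
and `wᵢ = ∑ⱼ cⱼ v'ⱼ` with `cᵢ = 0`; then `1 - |⟨vᵢ, v'ᵢ⟩|² = ‖wᵢ‖²`. The Gershgorin-type frame bound
`(1 - δn) ∑ |cⱼ|² ≤ ‖∑ cⱼ v'ⱼ‖²` gives `∑ |cⱼ|² ≤ 2‖wᵢ‖²`, while
`‖wᵢ‖² = ⟨wᵢ, v'ᵢ⟩ ≤ δ ∑ |cⱼ| ≤ δ √(n ∑ |cⱼ|²)`. Hence `‖wᵢ‖² ≤ 2nδ²`.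
-/

section Idempotents

variable {R A : Type*} [CommRing R] [Ring A] [Algebra R A] {P Q : A} {s : R}

theorem IsIdempotentElem.sub_mul_sub_mul_sub_mul_sub (hP : IsIdempotentElem P)
    (hQ : IsIdempotentElem Q) (hPQP : P * Q * P = s • P) (hQPQ : Q * P * Q = s • Q) :
    (P - Q) * (P - Q) * ((P - Q) * (P - Q)) = (1 - s) • ((P - Q) * (P - Q)) := by
  have hsq : (P - Q) * (P - Q) = P + Q - P * Q - Q * P := by
    simp only [sub_mul, mul_sub, hP.eq, hQ.eq]; abel
  have hP' : (P - Q) * (P - Q) * P = (1 - s) • P := by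
    rw [hsq, sub_smul, one_smul, ← hPQP]
    simp only [add_mul, sub_mul, hP.eq, mul_assoc]; abel
  have hQ' : (P - Q) * (P - Q) * Q = (1 - s) • Q := by
    rw [hsq, sub_smul, one_smul, ← hQPQ]
    simp only [add_mul, sub_mul, mul_assoc, hQ.eq]; abel
  calc (P - Q) * (P - Q) * ((P - Q) * (P - Q))
      = (P - Q) * (P - Q) * P + (P - Q) * (P - Q) * Q
        - (P - Q) * (P - Q) * P * Q - (P - Q) * (P - Q) * Q * P := by
        rw [hsq]; simp only [mul_add, mul_sub, mul_assoc]
    _ = (1 - s) • ((P - Q) * (P - Q)) := by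
        rw [hP', hQ', hsq, smul_mul_assoc, smul_mul_assoc]; simp only [smul_sub, smul_add]

end Idempotents

theorem LinearMap.trace_sub_mul_sub_of_isIdempotentElem {K V : Type*} [Field K] [AddCommGroup V]
    [Module K V] {P Q : Module.End K V} (hP : IsIdempotentElem P) (hQ : IsIdempotentElem Q)
    {s : K} (hPQP : P * Q * P = s • P) :
    trace K V ((P - Q) * (P - Q)) = trace K V P + trace K V Q - 2 * s * trace K V P := by
  have hPQ : trace K V (P * Q) = s * trace K V P := by
    calc trace K V (P * Q) = trace K V (P * P * Q) := by rw [hP.eq]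
      _ = trace K V (P * Q * P) := by rw [mul_assoc, trace_mul_comm]
      _ = s * trace K V P := by rw [hPQP, map_smul, smul_eq_mul]
  have hQP : trace K V (Q * P) = s * trace K V P := by rw [trace_mul_comm, hPQ]
  simp only [sub_mul, mul_sub, hP.eq, hQ.eq, map_sub, hPQ, hQP]
  ring

theorem Module.End.HasEigenvalue.eq_zero_or_eq_of_mul_self_eq_smul {K V : Type*} [Field K]
    [AddCommGroup V] [Module K V] {f : Module.End K V} {a μ : K} (hf : f * f = a • f)
    (hμ : f.HasEigenvalue μ) : μ = 0 ∨ μ = a := by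
  obtain ⟨x, hx, hx0⟩ := hμ.exists_hasEigenvector
  have hfx : f x = μ • x := Module.End.mem_eigenspace_iff.mp hx
  have h : (μ * μ) • x = (a * μ) • x := by
    simpa [hfx, smul_smul] using congrArg (· x) hf
  have := smul_left_injective K hx0 h
  rcases mul_eq_zero.mp (show μ * (μ - a) = 0 by linear_combination this) with h | h
  · exact .inl h
  · exact .inr (sub_eq_zero.mp h)

theorem Real.sum_sqrt_eq_sum_div_sqrt {ι : Type*} (s : Finset ι) {μ : ι → ℝ} {t : ℝ}
    (hμ : ∀ i ∈ s, μ i = 0 ∨ μ i = t) : ∑ i ∈ s, √(μ i) = (∑ i ∈ s, μ i) / √t := by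
  rw [Finset.sum_div]
  refine Finset.sum_congr rfl fun i hi => ?_
  rcases hμ i hi with h | h <;> simp [h, Real.div_sqrt]

section Outer

variable {E : Type} [NormedAddCommGroup E] [InnerProductSpace ℂ E]

open LinearMap

theorem outer_apply (v w : E) : outer v w = ⟪v, w⟫ • v := rfl

theorem isSymmetric_outer (v : E) : (outer v).IsSymmetric := by
  intro x y
  simp only [outer_apply, inner_smul_left, inner_smul_right, inner_conj_symm]
  ring

theorem isIdempotentElem_outer {v : E} (hv : ‖v‖ = 1) : IsIdempotentElem (outer v) := by
  ext x
  simp [outer_apply, inner_self_eq_norm_sq_to_K, hv]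

theorem outer_mul_outer_mul_outer (v w : E) :
    outer v * outer w * outer v = ((‖⟪v, w⟫‖ ^ 2 : ℝ) : ℂ) • outer v := by
  ext x
  simp only [Module.End.mul_apply, outer_apply, LinearMap.smul_apply, inner_smul_right, smul_smul]
  have h : ⟪w, v⟫ * ⟪v, w⟫ = ((‖⟪v, w⟫‖ ^ 2 : ℝ) : ℂ) := by
    rw [← inner_conj_symm v w, RCLike.mul_conj, RCLike.norm_conj]
    norm_cast
  rw [mul_assoc, h, mul_comm]

variable [FiniteDimensional ℂ E]

theorem trace_outer (v : E) : trace ℂ E (outer v) = ⟪v, v⟫ :=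
  InnerProductSpace.trace_rankOne v v

theorem traceNorm_eq_re_trace_div_sqrt {A : E →ₗ[ℂ] E} {t : ℝ}
    (h : adjoint A * A * (adjoint A * A) = (t : ℂ) • (adjoint A * A)) :
    traceNorm A = RCLike.re (trace ℂ E (adjoint A * A)) / √t := by
  have hT := isSymmetric_adjoint_mul_self A
  rw [traceNorm, hT.re_trace_eq_sum_eigenvalues rfl]
  refine Real.sum_sqrt_eq_sum_div_sqrt _ fun i _ => ?_
  rcases (hT.hasEigenvalue_eigenvalues rfl i).eq_zero_or_eq_of_mul_self_eq_smul h with h0 | ht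
  · exact .inl (RCLike.ofReal_eq_zero.mp h0)
  · exact .inr (Complex.ofReal_injective ht)

theorem traceNorm_outer_sub_outer {v w : E} (hv : ‖v‖ = 1) (hw : ‖w‖ = 1) :
    traceNorm (outer v - outer w) = 2 * √(1 - ‖⟪v, w⟫‖ ^ 2) := by
  set s := ‖⟪v, w⟫‖ ^ 2
  have hadj : adjoint (outer v - outer w) = outer v - outer w :=
    ((isSymmetric_outer v).sub (isSymmetric_outer w)).adjoint_eq
  have hP := isIdempotentElem_outer hv
  have hQ := isIdempotentElem_outer hw
  have hPQP := outer_mul_outer_mul_outer v w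
  have hQPQ : outer w * outer v * outer w = (s : ℂ) • outer w := by
    rw [outer_mul_outer_mul_outer, norm_inner_symm]
  have hsq : adjoint (outer v - outer w) * (outer v - outer w) *
      (adjoint (outer v - outer w) * (outer v - outer w)) =
      ((1 - s : ℝ) : ℂ) • (adjoint (outer v - outer w) * (outer v - outer w)) := by
    rw [hadj, hP.sub_mul_sub_mul_sub_mul_sub hQ hPQP hQPQ, Complex.ofReal_sub, Complex.ofReal_one]
  have htr : trace ℂ E ((outer v - outer w) * (outer v - outer w)) = ((2 * (1 - s) : ℝ) : ℂ) := by
    rw [LinearMap.trace_sub_mul_sub_of_isIdempotentElem hP hQ hPQP, trace_outer, trace_outer,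
      inner_self_eq_norm_sq_to_K, inner_self_eq_norm_sq_to_K, hv, hw]
    simp only [s]
    push_cast
    ring
  rw [traceNorm_eq_re_trace_div_sqrt hsq, hadj, htr, RCLike.re_to_complex, Complex.ofReal_re,
    mul_div_assoc, Real.div_sqrt]

end Outer

section AlmostOrthogonal

variable {E : Type*} [NormedAddCommGroup E] [InnerProductSpace ℂ E] {ι : Type*} [Fintype ι]
  {v : ι → E} {δ : ℝ}

theorem one_sub_mul_sum_norm_sq_le_norm_sum_smul_sq (hunit : ∀ i, ‖v i‖ = 1)
    (hsmall : ∀ i j, i ≠ j → ‖⟪v i, v j⟫‖ ≤ δ) (hδ0 : 0 ≤ δ) (c : ι → ℂ) :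
    (1 - δ * Fintype.card ι) * ∑ j, ‖c j‖ ^ 2 ≤ ‖∑ j, c j • v j‖ ^ 2 := by
  classical
  set x := ∑ j, c j • v j
  set L := ∑ j, ‖c j‖ ^ 2
  set S := ∑ j, ‖c j‖
  have hdev : ∀ j k, ‖(if j = k then 1 else 0) - ⟪v j, v k⟫‖ ≤ δ := by
    intro j k
    split_ifs with h
    · simp [h, inner_self_eq_norm_sq_to_K, hunit, hδ0]
    · simpa using hsmall j k h
  have hxx : ⟪x, x⟫ = ∑ j, ∑ k, starRingEnd ℂ (c j) * c k * ⟪v j, v k⟫ := by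
    rw [sum_inner]
    refine Finset.sum_congr rfl fun j _ => ?_
    rw [inner_smul_left, inner_sum, Finset.mul_sum]
    refine Finset.sum_congr rfl fun k _ => ?_
    rw [inner_smul_right, mul_assoc]
  have hL : (L : ℂ) = ∑ j, ∑ k, starRingEnd ℂ (c j) * c k * (if j = k then 1 else 0) := by
    simp only [L, mul_ite, mul_one, mul_zero, Finset.sum_ite_eq, Finset.mem_univ, if_true,
      RCLike.conj_mul]
    push_cast
    rfl
  have hgram : (L : ℂ) - ⟪x, x⟫ =
      ∑ j, ∑ k, starRingEnd ℂ (c j) * c k * ((if j = k then 1 else 0) - ⟪v j, v k⟫) := by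
    simp only [hxx, hL, mul_sub, Finset.sum_sub_distrib]
  have hdefect : ‖(L : ℂ) - ⟪x, x⟫‖ ≤ δ * S ^ 2 := by
    rw [hgram]
    calc _ ≤ ∑ j, ∑ k, ‖c j‖ * ‖c k‖ * δ := by
          refine (norm_sum_le _ _).trans (Finset.sum_le_sum fun j _ => ?_)
          refine (norm_sum_le _ _).trans (Finset.sum_le_sum fun k _ => ?_)
          rw [norm_mul, norm_mul, RCLike.norm_conj]
          gcongr
          exact hdev j k
      _ = δ * S ^ 2 := by
          rw [sq, Finset.sum_mul_sum, Finset.mul_sum]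
          simp_rw [Finset.mul_sum]
          exact Finset.sum_congr rfl fun j _ => Finset.sum_congr rfl fun k _ => by ring
  have hCS : S ^ 2 ≤ Fintype.card ι * L := by
    simpa using sq_sum_le_card_mul_sum_sq (s := Finset.univ) (f := fun j => ‖c j‖)
  have hre : L - ‖x‖ ^ 2 ≤ ‖(L : ℂ) - ⟪x, x⟫‖ := by
    refine le_trans (le_of_eq ?_) (RCLike.re_le_norm _)
    rw [map_sub, inner_self_eq_norm_sq, RCLike.re_to_complex, Complex.ofReal_re]
  nlinarith [mul_le_mul_of_nonneg_left hCS hδ0]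

theorem linearIndependent_of_norm_inner_le (hunit : ∀ i, ‖v i‖ = 1)
    (hsmall : ∀ i j, i ≠ j → ‖⟪v i, v j⟫‖ ≤ δ) (hδ0 : 0 ≤ δ) (hδ : δ * Fintype.card ι < 1) :
    LinearIndependent ℂ v := by
  rw [Fintype.linearIndependent_iff]
  intro c hc i
  have h := one_sub_mul_sum_norm_sq_le_norm_sum_smul_sq hunit hsmall hδ0 c
  rw [hc, norm_zero, zero_pow two_ne_zero] at h
  have hnonneg : ∀ j ∈ Finset.univ, 0 ≤ ‖c j‖ ^ 2 := fun j _ => sq_nonneg _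
  have hsum : ∑ j, ‖c j‖ ^ 2 = 0 :=
    le_antisymm (nonpos_of_mul_nonpos_right h (by linarith)) (Finset.sum_nonneg hnonneg)
  simpa using (Finset.sum_eq_zero_iff_of_nonneg hnonneg).mp hsum i (Finset.mem_univ i)

theorem norm_sq_le_of_mem_span_compl (hunit : ∀ i, ‖v i‖ = 1)
    (hsmall : ∀ i j, i ≠ j → ‖⟪v i, v j⟫‖ ≤ δ) (hδ0 : 0 ≤ δ) (hδ : δ * Fintype.card ι ≤ 1 / 2)
    {i : ι} {w : E} (hw : w ∈ Submodule.span ℂ (v '' {i}ᶜ)) (horth : ⟪w, v i - w⟫ = 0) :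
    ‖w‖ ^ 2 ≤ 2 * Fintype.card ι * δ ^ 2 := by
  obtain ⟨l, hl, rfl⟩ := (Finsupp.mem_span_image_iff_linearCombination ℂ).mp hw
  have hli : l i = 0 := (Finsupp.mem_supported' ℂ l).mp hl i (by simp)
  rw [Finsupp.linearCombination_apply, Finsupp.sum_fintype _ _ (by simp)] at horth ⊢
  set w := ∑ j, l j • v j
  set S := ∑ j, ‖l j‖
  set L := ∑ j, ‖l j‖ ^ 2
  have hww : ‖w‖ ^ 2 = ‖⟪w, v i⟫‖ := by
    rw [inner_sub_right, sub_eq_zero] at horth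
    rw [horth, inner_self_eq_norm_sq_to_K]
    simp
  have hinner : ‖⟪w, v i⟫‖ ≤ δ * S := by
    rw [sum_inner, Finset.mul_sum]
    refine (norm_sum_le _ _).trans (Finset.sum_le_sum fun j _ => ?_)
    rw [inner_smul_left, norm_mul, RCLike.norm_conj, mul_comm δ]
    rcases eq_or_ne j i with rfl | hj
    · simp [hli]
    · exact mul_le_mul_of_nonneg_left (hsmall j i hj) (norm_nonneg _)
  have hframe : L ≤ 2 * ‖w‖ ^ 2 := by
    have := one_sub_mul_sum_norm_sq_le_norm_sum_smul_sq hunit hsmall hδ0 l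
    nlinarith [Finset.sum_nonneg fun j (_ : j ∈ Finset.univ) => sq_nonneg ‖l j‖]
  have hCS : S ^ 2 ≤ Fintype.card ι * L := by
    simpa using sq_sum_le_card_mul_sum_sq (s := Finset.univ) (f := fun j => ‖l j‖)
  have hquartic : ‖w‖ ^ 2 * ‖w‖ ^ 2 ≤ (2 * Fintype.card ι * δ ^ 2) * ‖w‖ ^ 2 :=
    calc ‖w‖ ^ 2 * ‖w‖ ^ 2 ≤ (δ * S) * (δ * S) := by
          rw [hww]; exact mul_self_le_mul_self (norm_nonneg _) hinner
      _ = δ ^ 2 * S ^ 2 := by ring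
      _ ≤ δ ^ 2 * (Fintype.card ι * (2 * ‖w‖ ^ 2)) := by gcongr; exact hCS.trans (by gcongr)
      _ = (2 * Fintype.card ι * δ ^ 2) * ‖w‖ ^ 2 := by ring
  rcases (sq_nonneg ‖w‖).eq_or_lt with h | h
  · rw [← h]; positivity
  · exact le_of_mul_le_mul_right hquartic h

end AlmostOrthogonal

namespace InnerProductSpace

variable {𝕜 E ι : Type*} [RCLike 𝕜] [NormedAddCommGroup E] [InnerProductSpace 𝕜 E]
  [LinearOrder ι] [LocallyFiniteOrderBot ι] [WellFoundedLT ι]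

theorem sub_gramSchmidt_eq_sum (f : ι → E) (n : ι) :
    f n - gramSchmidt 𝕜 f n = ∑ i ∈ Finset.Iio n,
      (⟪gramSchmidt 𝕜 f i, f n⟫_𝕜 / (‖gramSchmidt 𝕜 f i‖ : 𝕜) ^ 2) • gramSchmidt 𝕜 f i :=
  sub_eq_iff_eq_add'.mpr (gramSchmidt_def'' 𝕜 f n)

theorem sub_gramSchmidt_mem_span (f : ι → E) (n : ι) :
    f n - gramSchmidt 𝕜 f n ∈ Submodule.span 𝕜 (f '' Set.Iio n) := by
  rw [← span_gramSchmidt_Iio, sub_gramSchmidt_eq_sum]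
  exact Submodule.sum_mem _ fun i hi =>
    Submodule.smul_mem _ _ (Submodule.subset_span ⟨i, Finset.mem_Iio.mp hi, rfl⟩)

theorem inner_gramSchmidt_sub_gramSchmidt (f : ι → E) (n : ι) :
    ⟪gramSchmidt 𝕜 f n, f n - gramSchmidt 𝕜 f n⟫_𝕜 = 0 := by
  rw [sub_gramSchmidt_eq_sum, inner_sum]
  refine Finset.sum_eq_zero fun i hi => ?_
  rw [inner_smul_right, gramSchmidt_orthogonal 𝕜 f (Finset.mem_Iio.mp hi).ne', mul_zero]

theorem inner_gramSchmidtNormed_self (f : ι → E) (n : ι) :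
    ⟪gramSchmidtNormed 𝕜 f n, f n⟫_𝕜 = ‖gramSchmidt 𝕜 f n‖ := by
  have h : ⟪gramSchmidt 𝕜 f n, f n⟫_𝕜 = (‖gramSchmidt 𝕜 f n‖ : 𝕜) ^ 2 := by
    rw [← add_sub_cancel (gramSchmidt 𝕜 f n) (f n), inner_add_right,
      inner_gramSchmidt_sub_gramSchmidt, add_zero, inner_self_eq_norm_sq_to_K]
  rcases eq_or_ne (gramSchmidt 𝕜 f n) 0 with h0 | h0
  · simp [gramSchmidtNormed, h0]
  · rw [gramSchmidtNormed, inner_smul_left, h, map_inv₀, RCLike.conj_ofReal]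
    field_simp [norm_ne_zero_iff.mpr h0]

theorem one_sub_norm_inner_gramSchmidtNormed_sq {f : ι → E} {n : ι} (hf : ‖f n‖ = 1) :
    1 - ‖⟪gramSchmidtNormed 𝕜 f n, f n⟫_𝕜‖ ^ 2 = ‖f n - gramSchmidt 𝕜 f n‖ ^ 2 := by
  have hpyth := norm_add_sq_eq_norm_sq_add_norm_sq_of_inner_eq_zero _ _
    (inner_gramSchmidt_sub_gramSchmidt (𝕜 := 𝕜) f n)
  rw [add_sub_cancel, hf] at hpyth
  rw [inner_gramSchmidtNormed_self, RCLike.norm_ofReal, abs_norm]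
  rw [sq, sq]
  linarith

end InnerProductSpace

open InnerProductSpace

theorem norm_sub_gramSchmidt_sq_le {E : Type*} [NormedAddCommGroup E] [InnerProductSpace ℂ E]
    {ι : Type*} [Fintype ι] [LinearOrder ι] [LocallyFiniteOrderBot ι] [WellFoundedLT ι]
    {v : ι → E} {δ : ℝ} (hunit : ∀ i, ‖v i‖ = 1) (hsmall : ∀ i j, i ≠ j → ‖⟪v i, v j⟫‖ ≤ δ)
    (hδ0 : 0 ≤ δ) (hδ : δ * Fintype.card ι ≤ 1 / 2) (i : ι) :
    ‖v i - gramSchmidt ℂ v i‖ ^ 2 ≤ 2 * Fintype.card ι * δ ^ 2 := by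
  have hspan : Set.Iio i ⊆ {i}ᶜ := fun j hj => (Set.mem_Iio.mp hj).ne
  have horth : ⟪v i - gramSchmidt ℂ v i, v i - (v i - gramSchmidt ℂ v i)⟫ = 0 := by
    rw [sub_sub_cancel, inner_eq_zero_symm]
    exact inner_gramSchmidt_sub_gramSchmidt v i
  exact norm_sq_le_of_mem_span_compl hunit hsmall hδ0 hδ
    (Submodule.span_mono (Set.image_mono hspan) (sub_gramSchmidt_mem_span v i)) horth

theorem gramSchmidt_rank_one_perturbation {E : Type} [NormedAddCommGroup E]
    [InnerProductSpace ℂ E] [FiniteDimensional ℂ E]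
    (n : ℕ) (δ : ℝ) (hδ0 : 0 ≤ δ) (hδ : δ < 1 / (2 * n))
    (v' : Fin n → E) (hunit : ∀ i, ‖v' i‖ = 1)
    (hsmall : ∀ i j, i ≠ j → ‖⟪v' i, v' j⟫‖ ≤ δ) :
    ∀ i : Fin n,
      traceNorm (outer (InnerProductSpace.gramSchmidtNormed ℂ v' i) - outer (v' i)) =
        2 * Real.sqrt (1 - ‖⟪InnerProductSpace.gramSchmidtNormed ℂ v' i, v' i⟫‖ ^ 2) ∧
      2 * Real.sqrt (1 - ‖⟪InnerProductSpace.gramSchmidtNormed ℂ v' i, v' i⟫‖ ^ 2) ≤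
        2 * Real.sqrt 6 * δ * Real.sqrt n := by
  have hδn : δ * Fintype.card (Fin n) ≤ 1 / 2 := by
    rcases n.eq_zero_or_pos with rfl | hn
    · norm_num
    · rw [lt_div_iff₀ (by positivity)] at hδ
      rw [Fintype.card_fin]
      linarith
  intro i
  have hindep := linearIndependent_of_norm_inner_le hunit hsmall hδ0 (by linarith)
  refine ⟨traceNorm_outer_sub_outer (gramSchmidtNormed_unit_length i hindep) (hunit i), ?_⟩
  have hw := norm_sub_gramSchmidt_sq_le hunit hsmall hδ0 hδn i
  rw [Fintype.card_fin] at hw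
  rw [one_sub_norm_inner_gramSchmidtNormed_sq (hunit i)]
  calc 2 * √(‖v' i - gramSchmidt ℂ v' i‖ ^ 2) ≤ 2 * √(6 * δ ^ 2 * n) := by
        gcongr
        nlinarith [sq_nonneg δ, n.cast_nonneg (α := ℝ)]
    _ = 2 * √6 * δ * √n := by
        rw [Real.sqrt_mul (by positivity), Real.sqrt_mul (by norm_num), Real.sqrt_sq hδ0]
        ring
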